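/- arXiv:2010.04392 — 4 statements merged into one kernel-verified Lean document; each statement's English description precedes it below -/
import Mathlib

section
/- For every integer n ≥ 1, the twisted partition monoid P_n^Φ has only countably many congruences, i.e. the set of all congruences on P_n^Φ is countable. -/
/-!
Left multiplication by `(1, id)` shows that a congruence `σ` on `P_n^Φ` is invariant under the
shift `(i, α) ↦ (i + 1, α)`. Hence on each column `ℕ × {α}` it restricts to a congruence of
`(ℕ, +)`, which is equality or `(m, m + d)^♯`. Between two columns `α`, `β` the `σ`-related
pairs are generated, under the shift and the two column congruences, by finitely many of them:
those in `[0, m_α + d_α) × [0, m_β + d_β)` if both column congruences are nontrivial, at most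
one if both are trivial (all pairs then lie on one diagonal), and none otherwise. Since `P_n`
is finite, `σ` is therefore determined by countably many data.
-/

namespace TPM

/-- Vertex set `{1,…,n} ∪ {1',…,n'}`: `Sum.inl` = unprimed (upper row),
`Sum.inr` = primed (lower row). -/
abbrev V (n : ℕ) := Fin n ⊕ Fin n

/-- The partition monoid `P_n`: set partitions of the `2n`-element set `V n`,
encoded as equivalence relations (setoids). -/
abbrev PM (n : ℕ) := Setoid (V n)

/-- Three-row vertex set of the product graph: top / middle / bottom. -/
abbrev W (n : ℕ) := Fin n ⊕ (Fin n ⊕ Fin n)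

variable {n : ℕ}

/-- First factor: unprimed ↦ top, primed ↦ middle. -/
def topMid : V n → W n
  | Sum.inl i => Sum.inl i
  | Sum.inr i => Sum.inr (Sum.inl i)

/-- Second factor: unprimed ↦ middle, primed ↦ bottom. -/
def midBot : V n → W n
  | Sum.inl i => Sum.inr (Sum.inl i)
  | Sum.inr i => Sum.inr (Sum.inr i)

/-- Embedding of `V n` as top and bottom rows of the three-row set. -/
def topBot : V n → W n
  | Sum.inl i => Sum.inl i
  | Sum.inr i => Sum.inr (Sum.inr i)

/-- Edge relation of the product graph `Γ(α,β)`. -/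
def graphRel (α β : PM n) (x y : W n) : Prop :=
  (∃ u v : V n, α.r u v ∧ x = topMid u ∧ y = topMid v) ∨
  (∃ u v : V n, β.r u v ∧ x = midBot u ∧ y = midBot v)

/-- Connectivity (equivalence closure of the edge relation) in `Γ(α,β)`. -/
def conn (α β : PM n) : W n → W n → Prop := Relation.EqvGen (graphRel α β)

/-- Connectivity in `Γ(α,β)`, as a setoid on the three-row vertex set. -/
def connSetoid (α β : PM n) : Setoid (W n) :=
  ⟨conn α β, Relation.EqvGen.is_equivalence _⟩

/-- The product of two partitions: `x,y` lie in the same block of `αβ` iff they are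
connected in `Γ(α,β)`. -/
def pmul (α β : PM n) : PM n :=
  ⟨fun x y => conn α β (topBot x) (topBot y),
    ⟨fun _ => Relation.EqvGen.refl _, fun h => Relation.EqvGen.symm _ _ h, fun h h' => Relation.EqvGen.trans _ _ _ h h'⟩⟩

/-- A vertex of the three-row set lies in the middle row. -/
def isMid (x : W n) : Prop := ∃ i : Fin n, x = Sum.inr (Sum.inl i)

/-- `Φ(α,β)`: the number of floating components of `Γ(α,β)`, i.e. connected components
all of whose vertices lie in the middle row. -/
noncomputable def Phi (α β : PM n) : ℕ :=
  Nat.card {c : Quotient (connSetoid α β) //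
    ∀ x : W n, Quotient.mk (connSetoid α β) x = c → isMid x}

/-- The rank of a partition: the number of transversal blocks (blocks containing both an
unprimed and a primed element). -/
noncomputable def rnk (α : PM n) : ℕ :=
  Nat.card {c : Quotient α //
    (∃ i : Fin n, Quotient.mk α (Sum.inl i) = c) ∧ ∃ i : Fin n, Quotient.mk α (Sum.inr i) = c}

/-- Which row of `V n` a point lies in. -/
def side : V n → Bool
  | Sum.inl _ => true
  | Sum.inr _ => false

/-- `α̂`: split each transversal of `α` into its unprimed part and its primed part. -/
def hat (α : PM n) : PM n :=
  ⟨fun x y => α.r x y ∧ side x = side y,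
    ⟨fun x => ⟨α.iseqv.refl x, rfl⟩,
     fun h => ⟨α.iseqv.symm h.1, h.2.symm⟩,
     fun h h' => ⟨α.iseqv.trans h.1 h'.1, h.2.trans h'.2⟩⟩⟩

/-- The twisted product on `ℕ × P_n`:  `(i,α)(j,β) = (i + j + Φ(α,β), αβ)`. -/
noncomputable def tmul (a b : ℕ × PM n) : ℕ × PM n :=
  (a.1 + b.1 + Phi a.2 b.2, pmul a.2 b.2)

/-- A congruence on a set equipped with a binary operation: an equivalence relation
compatible with the operation on both sides. -/
def IsCongruence {M : Type*} (mul : M → M → M) (σ : M → M → Prop) : Prop :=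
  Equivalence σ ∧ ∀ x y a, σ x y → σ (mul a x) (mul a y) ∧ σ (mul x a) (mul y a)

/-- Green's relation `R`: equality of the right ideals `xM = yM`. -/
def greenR {M : Type*} (mul : M → M → M) (x y : M) : Prop :=
  Set.range (mul x) = Set.range (mul y)

/-- Green's relation `L`: `Mx = My`. -/
def greenL {M : Type*} (mul : M → M → M) (x y : M) : Prop :=
  Set.range (fun a => mul a x) = Set.range (fun a => mul a y)

/-- The principal two-sided ideal `MxM`. -/
def jSet {M : Type*} (mul : M → M → M) (x : M) : Set M :=
  Set.range (fun p : M × M => mul (mul p.1 x) p.2)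

/-- Green's relation `J`: `MxM = MyM`. -/
def greenJ {M : Type*} (mul : M → M → M) (x y : M) : Prop :=
  jSet mul x = jSet mul y

/-- Green's relation `H = R ∩ L`. -/
def greenH {M : Type*} (mul : M → M → M) (x y : M) : Prop :=
  greenR mul x y ∧ greenL mul x y

/-- Green's relation `D = R ∘ L`. -/
def greenD {M : Type*} (mul : M → M → M) (x y : M) : Prop :=
  ∃ z, greenR mul x z ∧ greenL mul z y

/-- `pd(α,β)` satisfies `P`, where `α` has `p` transversals: there are representatives
`a s` of the upper parts of the `p` (pairwise distinct) transversals of `α`, with `b s`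
representing the corresponding lower parts, and a permutation `π` with `P π` such that the
block of `β` containing `a s` contains `b (π s)`.  (For H-related `α, β ∈ D_p` this says
exactly that some representation of the permutational difference `pd(α,β)` satisfies `P`.) -/
def pdIn (p : ℕ) (P : Equiv.Perm (Fin p) → Prop) (α β : PM n) : Prop :=
  ∃ (a b : Fin p → Fin n) (π : Equiv.Perm (Fin p)),
    (∀ s t, α.r (Sum.inl (a s)) (Sum.inl (a t)) → s = t) ∧
    (∀ s, α.r (Sum.inl (a s)) (Sum.inr (b s))) ∧
    (∀ s, β.r (Sum.inl (a s)) (Sum.inr (b (π s)))) ∧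
    P π

/-- The relation `ν_N` on `D_p`, for a subgroup `N ≤ S_p`:  H-related pairs of rank-`p`
partitions whose permutational difference lies in `N`. -/
def nuRel (p : ℕ) (N : Subgroup (Equiv.Perm (Fin p))) (α β : PM n) : Prop :=
  rnk α = p ∧ rnk β = p ∧ greenH pmul α β ∧ pdIn p (· ∈ N) α β

/-- The congruence `(m, m+d)^♯` on the additive monoid `ℕ` (intended for `d ≥ 1`). -/
def natCong (m d : ℕ) (i j : ℕ) : Prop :=
  i = j ∨ (m ≤ i ∧ m ≤ j ∧ i % d = j % d)

/-- `min θ ≤ i` for a congruence `θ` on `ℕ` (with `min Δ_ℕ = ∞`). -/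
def minLE (θ : ℕ → ℕ → Prop) (i : ℕ) : Prop :=
  ∃ a b, θ a b ∧ a ≠ b ∧ a ≤ i

/-- `k ≤ min θ` for a congruence `θ` on `ℕ` (with `min Δ_ℕ = ∞`). -/
def leMin (k : ℕ) (θ : ℕ → ℕ → Prop) : Prop :=
  ∀ a b, θ a b → a ≠ b → k ≤ a

/-- The possible entries of a C-matrix. -/
inductive CEntry : Type
  | delta | muUp | muDown | mu | lam | rho | R
  | nsym (q : ℕ) (N : Subgroup (Equiv.Perm (Fin q)))

/-- Whether a C-matrix entry is an N-symbol. -/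
def isNsym : CEntry → Prop
  | CEntry.nsym _ _ => True
  | _ => False

/-- The allowed values of the symbol `ζ` in row types RT2, RT5, RT6. -/
def isZeta (e : CEntry) : Prop :=
  e = CEntry.mu ∨ e = CEntry.muUp ∨ e = CEntry.muDown ∨ e = CEntry.delta

/-- The allowed values of the symbol `ξ` in row types RT4–RT7: any of `μ,ρ,λ,R` if
`d = 1`, and only `μ` if `d > 1`. -/
def xiOK (d : ℕ) (e : CEntry) : Prop :=
  e = CEntry.mu ∨ (d = 1 ∧ (e = CEntry.rho ∨ e = CEntry.lam ∨ e = CEntry.R))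

/-- Row type RT1 for rows 0 and 1: all entries `Δ`. -/
def RT1 (M0 M1 : ℕ → CEntry) : Prop :=
  (∀ i, M0 i = CEntry.delta) ∧ (∀ i, M1 i = CEntry.delta)

/-- Row type RT2. -/
def RT2 (Θ0 Θ1 : ℕ → ℕ → Prop) (M0 M1 : ℕ → CEntry) : Prop :=
  Θ0 = Eq ∧ Θ1 = Eq ∧
  ∃ i ζ, isZeta ζ ∧
    (∀ j, j < i → M0 j = CEntry.delta) ∧ (∀ j, i ≤ j → M0 j = CEntry.mu) ∧
    (∀ j, j < i → M1 j = CEntry.delta) ∧ M1 i = ζ ∧ (∀ j, i < j → M1 j = CEntry.mu)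

/-- Row type RT3. -/
def RT3 (Θ0 : ℕ → ℕ → Prop) (M0 M1 : ℕ → CEntry) : Prop :=
  ∃ m ξ, Θ0 = natCong m 1 ∧ (ξ = CEntry.rho ∨ ξ = CEntry.lam ∨ ξ = CEntry.R) ∧
    (∀ i, M1 i = CEntry.delta) ∧
    (∀ j, j < m → M0 j = CEntry.delta) ∧ (∀ j, m ≤ j → M0 j = ξ)

/-- Row type RT4. -/
def RT4 (Θ0 Θ1 : ℕ → ℕ → Prop) (M0 M1 : ℕ → CEntry) : Prop :=
  ∃ m d ξ, 1 ≤ d ∧ Θ0 = natCong m d ∧ Θ1 = natCong m d ∧ xiOK d ξ ∧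
    (∀ j, j < m → M0 j = CEntry.delta ∧ M1 j = CEntry.delta) ∧
    (∀ j, m ≤ j → M0 j = ξ ∧ M1 j = ξ)

/-- Row type RT5. -/
def RT5 (Θ0 Θ1 : ℕ → ℕ → Prop) (M0 M1 : ℕ → CEntry) : Prop :=
  ∃ m d i ξ ζ, 1 ≤ d ∧ i < m ∧ Θ0 = natCong m d ∧ Θ1 = natCong (m + 1) d ∧
    xiOK d ξ ∧ isZeta ζ ∧
    (∀ j, j < i → M0 j = CEntry.delta) ∧ (∀ j, i ≤ j → j < m → M0 j = CEntry.mu) ∧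
    (∀ j, m ≤ j → M0 j = ξ) ∧
    (∀ j, j < i → M1 j = CEntry.delta) ∧ M1 i = ζ ∧
    (∀ j, i < j → j ≤ m → M1 j = CEntry.mu) ∧ (∀ j, m < j → M1 j = ξ)

/-- Row type RT6. -/
def RT6 (Θ0 Θ1 : ℕ → ℕ → Prop) (M0 M1 : ℕ → CEntry) : Prop :=
  ∃ m l d ξ ζ, 1 ≤ d ∧ m < l ∧ Θ0 = natCong m d ∧ Θ1 = natCong l d ∧
    xiOK d ξ ∧ isZeta ζ ∧
    (∀ j, j < m → M0 j = CEntry.delta) ∧ (∀ j, m ≤ j → M0 j = ξ) ∧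
    (∀ j, j < l - 1 → M1 j = CEntry.delta) ∧ M1 (l - 1) = ζ ∧ (∀ j, l ≤ j → M1 j = ξ)

/-- Row type RT7. -/
def RT7 (Θ0 Θ1 : ℕ → ℕ → Prop) (M0 M1 : ℕ → CEntry) : Prop :=
  ∃ m l d ξ, 1 ≤ d ∧ 0 < m ∧ m + 1 < l ∧ (l - 1) % d = m % d ∧
    Θ0 = natCong m d ∧ Θ1 = natCong l d ∧ xiOK d ξ ∧
    (∀ j, j < m - 1 → M0 j = CEntry.delta) ∧ M0 (m - 1) = CEntry.mu ∧
    (∀ j, m ≤ j → M0 j = ξ) ∧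
    (∀ j, j < l - 1 → M1 j = CEntry.delta) ∧ M1 (l - 1) = CEntry.mu ∧
    (∀ j, l ≤ j → M1 j = ξ)

/-- Row type RT8 for a row `q ≥ 2`: all entries `Δ`. -/
def RT8 (Mq : ℕ → CEntry) : Prop := ∀ i, Mq i = CEntry.delta

/-- Row type RT9 for a row `q ≥ 2`. -/
def RT9 (q : ℕ) (Θq : ℕ → ℕ → Prop) (Mq : ℕ → CEntry) : Prop :=
  ∃ (i k : ℕ) (Ns : ℕ → Subgroup (Equiv.Perm (Fin q))),
    i ≤ k ∧ leMin k Θq ∧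
    (∀ j, i ≤ j → j ≤ k → Ns j ≠ ⊥ ∧ (Ns j).Normal) ∧
    (∀ j j', i ≤ j → j ≤ j' → j' ≤ k → Ns j ≤ Ns j') ∧
    (∀ j, j < i → Mq j = CEntry.delta) ∧
    (∀ j, i ≤ j → j < k → Mq j = CEntry.nsym q (Ns j)) ∧
    (∀ j, k ≤ j → Mq j = CEntry.nsym q (Ns k))

/-- Row type RT10 for a row `q ≥ 2`. -/
def RT10 (q : ℕ) (Θq : ℕ → ℕ → Prop) (Mq : ℕ → CEntry) : Prop :=
  ∃ (i m : ℕ) (Ns : ℕ → Subgroup (Equiv.Perm (Fin q))),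
    i ≤ m ∧ Θq = natCong m 1 ∧
    (∀ j, i ≤ j → j < m → Ns j ≠ ⊥ ∧ (Ns j).Normal) ∧
    (∀ j j', i ≤ j → j ≤ j' → j' < m → Ns j ≤ Ns j') ∧
    (∀ j, j < i → Mq j = CEntry.delta) ∧
    (∀ j, i ≤ j → j < m → Mq j = CEntry.nsym q (Ns j)) ∧
    (∀ j, m ≤ j → Mq j = CEntry.R)

/-- A C-pair for `P_n^Φ`: a descending chain `Θ = (θ_0 ⊇ ⋯ ⊇ θ_n)` of congruences on
`(ℕ,+)` together with a matrix `M = (M_{qi})`, `0 ≤ q ≤ n`, `i ∈ ℕ`, whose rows 0 and 1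
jointly have one of the types RT1–RT7, whose rows `q ≥ 2` have one of the types RT8–RT10,
and which satisfies the verticality conditions (V1) and (V2). -/
def IsCPair (n : ℕ) (Θ : ℕ → ℕ → ℕ → Prop) (M : ℕ → ℕ → CEntry) : Prop :=
  (∀ q, q ≤ n → IsCongruence (· + ·) (Θ q)) ∧
  (∀ q r, q ≤ r → r ≤ n → ∀ i j, Θ r i j → Θ q i j) ∧
  (RT1 (M 0) (M 1) ∨ RT2 (Θ 0) (Θ 1) (M 0) (M 1) ∨ RT3 (Θ 0) (M 0) (M 1) ∨
    RT4 (Θ 0) (Θ 1) (M 0) (M 1) ∨ RT5 (Θ 0) (Θ 1) (M 0) (M 1) ∨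
    RT6 (Θ 0) (Θ 1) (M 0) (M 1) ∨ RT7 (Θ 0) (Θ 1) (M 0) (M 1)) ∧
  (∀ q, 2 ≤ q → q ≤ n → (RT8 (M q) ∨ RT9 q (Θ q) (M q) ∨ RT10 q (Θ q) (M q))) ∧
  (∀ q i, 1 ≤ q → q ≤ n → isNsym (M q i) →
    ¬(M (q - 1) i = CEntry.delta ∨ M (q - 1) i = CEntry.muUp ∨
      M (q - 1) i = CEntry.muDown ∨ isNsym (M (q - 1) i))) ∧
  (∀ q i, 2 ≤ q → q ≤ n → M q i = CEntry.R → M (q - 1) i = CEntry.R)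

/-- The relation `cg(Θ,M)` on `P_n^Φ` associated with a C-pair `(Θ,M)`: conditions
(C1)–(C8). -/
def cg (n : ℕ) (Θ : ℕ → ℕ → ℕ → Prop) (M : ℕ → ℕ → CEntry)
    (a b : ℕ × PM n) : Prop :=
  -- (C1)
  (M (rnk a.2) a.1 = CEntry.delta ∧ M (rnk b.2) b.1 = CEntry.delta ∧
    Θ (rnk a.2) a.1 b.1 ∧ a.2 = b.2) ∨
  -- (C2)
  (M (rnk a.2) a.1 = CEntry.R ∧ M (rnk b.2) b.1 = CEntry.R) ∨
  -- (C3)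
  (∃ p N, M (rnk a.2) a.1 = CEntry.nsym p N ∧ M (rnk b.2) b.1 = CEntry.nsym p N ∧
    Θ (rnk a.2) a.1 b.1 ∧ rnk a.2 = p ∧ greenH pmul a.2 b.2 ∧ pdIn p (· ∈ N) a.2 b.2) ∨
  -- (C4)
  (M (rnk a.2) a.1 = CEntry.lam ∧ M (rnk b.2) b.1 = CEntry.lam ∧
    greenL pmul (hat a.2) (hat b.2)) ∨
  -- (C5)
  (M (rnk a.2) a.1 = CEntry.rho ∧ M (rnk b.2) b.1 = CEntry.rho ∧
    greenR pmul (hat a.2) (hat b.2)) ∨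
  -- (C6)
  (M (rnk a.2) a.1 = CEntry.muDown ∧ M (rnk b.2) b.1 = CEntry.muDown ∧
    hat a.2 = hat b.2 ∧ greenL pmul a.2 b.2) ∨
  -- (C7)
  (M (rnk a.2) a.1 = CEntry.muUp ∧ M (rnk b.2) b.1 = CEntry.muUp ∧
    hat a.2 = hat b.2 ∧ greenR pmul a.2 b.2) ∨
  -- (C8)
  (M (rnk a.2) a.1 = CEntry.mu ∧ M (rnk b.2) b.1 = CEntry.mu ∧
    hat a.2 = hat b.2 ∧
    ((rnk a.2 = rnk b.2 ∧ Θ (rnk a.2) a.1 b.1) ∨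
     (rnk a.2 ≠ rnk b.2 ∧ Θ 0 (a.1 + rnk b.2) (b.1 + rnk a.2) ∧
        ¬ minLE (Θ (rnk a.2)) a.1 ∧ ¬ minLE (Θ (rnk b.2)) b.1) ∨
     (rnk a.2 ≠ rnk b.2 ∧ Θ 0 (a.1 + rnk b.2) (b.1 + rnk a.2) ∧
        minLE (Θ (rnk a.2)) a.1 ∧ minLE (Θ (rnk b.2)) b.1)))

/-- The C-pair `(Θ,M)` is exceptional with exceptional row `q`, where
`θ_q = (m, m+2d)^♯`. -/
def ExcAt (n : ℕ) (Θ : ℕ → ℕ → ℕ → Prop) (M : ℕ → ℕ → CEntry) (q m d : ℕ) : Prop :=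
  2 ≤ q ∧ q ≤ n ∧ 1 ≤ d ∧ Θ q = natCong m (2 * d) ∧
  ((2 < q ∧ M q m = CEntry.nsym q (alternatingGroup (Fin q))) ∨
   (q = 2 ∧ M 2 m = CEntry.delta ∧
     (M 1 m = CEntry.mu ∨ M 1 m = CEntry.rho ∨ M 1 m = CEntry.lam ∨ M 1 m = CEntry.R) ∧
     (∀ i j, natCong m d i j → Θ 1 i j)))

/-- The exceptional congruence `cgx(Θ,M)` associated with an exceptional C-pair:
`cg(Θ,M)` together with the pairs of (C9). -/
def cgx (n : ℕ) (Θ : ℕ → ℕ → ℕ → Prop) (M : ℕ → ℕ → CEntry) (q m d : ℕ)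
    (a b : ℕ × PM n) : Prop :=
  cg n Θ M a b ∨
  (rnk a.2 = q ∧ rnk b.2 = q ∧ natCong m d a.1 b.1 ∧ ¬ Θ q a.1 b.1 ∧
    greenH pmul a.2 b.2 ∧ pdIn q (fun π => π ∉ alternatingGroup (Fin q)) a.2 b.2)

/-- The Rees relation of a subset `I`. -/
def rees {M : Type*} (I : Set M) (x y : M) : Prop := x = y ∨ (x ∈ I ∧ y ∈ I)

/-- A (possibly empty) ideal of `P_n^Φ`: `MIM ⊆ I`. -/
def tIdeal (n : ℕ) (I : Set (ℕ × PM n)) : Prop :=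
  ∀ a b x, x ∈ I → tmul (tmul a x) b ∈ I

/-- `I(σ)`: the union of all ideals `I` of `P_n^Φ` whose Rees congruence is contained
in `σ`. -/
def Isig (n : ℕ) (σ : (ℕ × PM n) → (ℕ × PM n) → Prop) : Set (ℕ × PM n) :=
  ⋃₀ {I | tIdeal n I ∧ ∀ x y, rees I x y → σ x y}

/-- The 0-twisted partition monoid `P_{n,0}^Φ`, carried by `Option (P_n)` with
`none` the zero element `✗`. -/
noncomputable def mul0 (a b : Option (PM n)) : Option (PM n) :=
  match a, b with
  | some α, some β => if Phi α β = 0 then some (pmul α β) else none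
  | _, _ => none

/-- `rank a ≤ q`, where `rank ✗ = -∞`. -/
def rnkLE (a : Option (PM n)) (q : ℕ) : Prop :=
  ∀ α, a = some α → rnk α ≤ q

/-- The Rees congruence `R_q` on `P_{n,0}^Φ`. -/
def ReesQ (q : ℕ) (a b : Option (PM n)) : Prop :=
  a = b ∨ (rnkLE a q ∧ rnkLE b q)

/-- Lift a relation on `P_n` to `P_{n,0}^Φ = P_n ∪ {✗}`. -/
def lift2 (r : PM n → PM n → Prop) (a b : Option (PM n)) : Prop :=
  ∃ α β, a = some α ∧ b = some β ∧ r α β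


lemma natCong_comm {m d i j : ℕ} : natCong m d i j ↔ natCong m d j i := by
  unfold natCong
  constructor <;> rintro (h | ⟨hi, hj, h⟩)
  all_goals first | exact Or.inl h.symm | exact Or.inr ⟨hj, hi, h.symm⟩

lemma natCong_add_iff {m d i t : ℕ} : natCong m d i (i + t) ↔ t = 0 ∨ (m ≤ i ∧ d ∣ t) := by
  have hmod : i % d = (i + t) % d ↔ d ∣ t := by
    rw [← Nat.ModEq, Nat.modEq_iff_dvd' (Nat.le_add_right i t), Nat.add_sub_cancel_left]
  unfold natCong
  constructor
  · rintro (h | ⟨hi, -, h⟩)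
    · omega
    · exact Or.inr ⟨hi, hmod.1 h⟩
  · rintro (rfl | ⟨hi, h⟩)
    · exact Or.inl rfl
    · exact Or.inr ⟨hi, by omega, hmod.2 h⟩

lemma rel_add_mul_of_step {θ : ℕ → ℕ → Prop} (hθ : Equivalence θ) {e m : ℕ}
    (hstep : ∀ x, m ≤ x → θ x (x + e)) (k : ℕ) {x : ℕ} (hx : m ≤ x) : θ x (x + k * e) := by
  induction k with
  | zero => simpa using hθ.refl x
  | succ k ih => exact hθ.trans ih (by rw [Nat.succ_mul, ← add_assoc]; exact hstep _ (by omega))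

lemma eq_natCong_of_forall_add {θ : ℕ → ℕ → Prop} (hθ : Equivalence θ) {m d : ℕ}
    (h : ∀ i t, θ i (i + t) ↔ natCong m d i (i + t)) : θ = natCong m d := by
  refine funext₂ fun i j => propext ?_
  rcases le_total i j with hij | hij
  · obtain ⟨t, rfl⟩ := Nat.exists_eq_add_of_le hij
    exact h i t
  · obtain ⟨t, rfl⟩ := Nat.exists_eq_add_of_le hij
    exact ⟨fun hji => natCong_comm.1 ((h j t).1 (hθ.symm hji)),
      fun hji => hθ.symm ((h j t).2 (natCong_comm.1 hji))⟩

/-- `natCong m 0` is equality, so this covers the trivial congruence. -/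
theorem exists_eq_natCong {θ : ℕ → ℕ → Prop} (hθ : Equivalence θ)
    (hshift : ∀ i j, θ i j → θ (i + 1) (j + 1)) : ∃ m d, θ = natCong m d := by
  classical
  by_cases hbase : ∃ a e, 0 < e ∧ θ a (a + e)
  swap
  · push Not at hbase
    refine ⟨0, 0, eq_natCong_of_forall_add hθ fun i t => ?_⟩
    rw [natCong_add_iff, zero_dvd_iff, and_iff_right (Nat.zero_le i), or_self]
    refine ⟨fun h => ?_, fun ht => ht ▸ hθ.refl i⟩
    by_contra ht
    exact hbase i t (Nat.pos_of_ne_zero ht) h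
  obtain ⟨m, ⟨e, he, hme⟩, hm_min⟩ : ∃ m, (∃ e, 0 < e ∧ θ m (m + e)) ∧
      ∀ a e, 0 < e → θ a (a + e) → m ≤ a :=
    ⟨Nat.find hbase, Nat.find_spec hbase, fun a e he h => Nat.find_min' hbase ⟨e, he, h⟩⟩
  have hgap : ∃ e, 0 < e ∧ ∃ a, θ a (a + e) := ⟨e, he, m, hme⟩
  obtain ⟨d, ⟨hd, a, had⟩, hd_min⟩ : ∃ d, (0 < d ∧ ∃ a, θ a (a + d)) ∧
      ∀ a e, 0 < e → θ a (a + e) → d ≤ e :=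
    ⟨Nat.find hgap, Nat.find_spec hgap, fun a e he h => Nat.find_min' hgap ⟨he, a, h⟩⟩
  have shift_to : ∀ {x y e}, x ≤ y → θ x (x + e) → θ y (y + e) := by
    intro x y e hxy h
    obtain ⟨k, rfl⟩ := Nat.exists_eq_add_of_le hxy
    induction k with
    | zero => exact h
    | succ k ih => simpa [← add_assoc, add_right_comm _ e] using hshift _ _ (ih (by omega))
  -- climb from `x` by multiples of `e` to above `a`, where the step `d` is available
  have hperiod : ∀ x, m ≤ x → θ x (x + d) := by
    intro x hx
    have h1 : θ x (x + a * e) := rel_add_mul_of_step hθ (fun y hy => shift_to hy hme) a hx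
    have h2 : θ (x + a * e) (x + a * e + d) := shift_to (by nlinarith) had
    have h3 : θ (x + d) (x + d + a * e) :=
      rel_add_mul_of_step hθ (fun y hy => shift_to hy hme) a (by omega)
    exact hθ.trans (hθ.trans h1 h2) (by simpa [add_right_comm] using hθ.symm h3)
  have key : ∀ i t, θ i (i + t) ↔ natCong m d i (i + t) := by
    intro i t
    rw [natCong_add_iff]
    constructor
    · intro h
      rcases Nat.eq_zero_or_pos t with ht | ht
      · exact Or.inl ht
      have hrem : θ (i + t % d) (i + t % d + t / d * d) :=
        rel_add_mul_of_step hθ hperiod _ (by have := hm_min i t ht h; omega)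
      rw [add_assoc, mul_comm, Nat.mod_add_div] at hrem
      have hrem' : θ i (i + t % d) := hθ.trans h (hθ.symm hrem)
      refine Or.inr ⟨hm_min i t ht h, Nat.dvd_of_mod_eq_zero ?_⟩
      by_contra hne
      have := hd_min i _ (Nat.pos_of_ne_zero hne) hrem'
      exact absurd (Nat.mod_lt t hd) (by omega)
    · rintro (rfl | ⟨hmi, q, rfl⟩)
      · exact hθ.refl i
      · simpa [mul_comm] using rel_add_mul_of_step hθ hperiod q hmi
  exact ⟨m, d, eq_natCong_of_forall_add hθ key⟩

lemma natCong_zero_iff {m i j : ℕ} : natCong m 0 i j ↔ i = j := by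
  simp only [natCong, Nat.mod_zero]
  constructor
  · rintro (h | ⟨-, -, h⟩) <;> exact h
  · exact Or.inl

lemma exists_lt_natCong {m d : ℕ} (hd : 0 < d) (i : ℕ) : ∃ i₀ < m + d, natCong m d i₀ i := by
  rcases lt_or_ge i m with hi | hi
  · exact ⟨i, by omega, Or.inl rfl⟩
  · obtain ⟨t, rfl⟩ := Nat.exists_eq_add_of_le hi
    refine ⟨m + t % d, by have := Nat.mod_lt t hd; omega, ?_⟩
    have h := natCong_add_iff.2 (Or.inr ⟨Nat.le_add_right m (t % d), Nat.dvd_mul_right d (t / d)⟩)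
    rwa [add_assoc, Nat.mod_add_div] at h

def ShiftInvariant {X : Type*} (σ : ℕ × X → ℕ × X → Prop) : Prop :=
  ∀ i j a b, σ (i, a) (j, b) → σ (i + 1, a) (j + 1, b)

/-- For equivalences `θ`, `θ'`: the least relation containing `w` that is invariant under
`(i, j) ↦ (i + 1, j + 1)` and saturated by `θ` on the left and `θ'` on the right. -/
def windowRel (θ θ' : ℕ → ℕ → Prop) (w : Finset (ℕ × ℕ)) (i j : ℕ) : Prop :=
  ∃ p ∈ w, ∃ k, θ (p.1 + k) i ∧ θ' (p.2 + k) j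

section ShiftInvariant

variable {X : Type*} {σ : ℕ × X → ℕ × X → Prop}

lemma ShiftInvariant.add (hs : ShiftInvariant σ) (k : ℕ) {i j : ℕ} {a b : X}
    (h : σ (i, a) (j, b)) : σ (i + k, a) (j + k, b) := by
  induction k with
  | zero => exact h
  | succ k ih => exact hs _ _ _ _ ih

variable (hσ : Equivalence σ) (hs : ShiftInvariant σ) {a b : X} {ma da mb db : ℕ}
  (ha : ∀ i j, σ (i, a) (j, a) ↔ natCong ma da i j)
  (hb : ∀ i j, σ (i, b) (j, b) ↔ natCong mb db i j)
include hσ hs ha hb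

lemma rel_of_windowRel {w : Finset (ℕ × ℕ)} (hw : ∀ p ∈ w, σ (p.1, a) (p.2, b)) {i j : ℕ}
    (h : windowRel (natCong ma da) (natCong mb db) w i j) : σ (i, a) (j, b) := by
  obtain ⟨p, hp, k, hi, hj⟩ := h
  exact hσ.trans (hσ.trans (hσ.symm ((ha _ _).2 hi)) (hs.add k (hw p hp))) ((hb _ _).2 hj)

lemma not_rel_of_eq_zero_of_pos (hda : da = 0) (hdb : 0 < db) (i j : ℕ) : ¬σ (i, a) (j, b) := by
  intro h
  have h₁ : σ (i + mb, a) (j + mb, b) := hs.add mb h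
  have h₂ : σ (i + mb + db, a) (j + mb + db, b) := hs.add db h₁
  have h₃ : σ (j + mb, b) (j + mb + db, b) :=
    (hb _ _).2 (natCong_add_iff.2 (Or.inr ⟨Nat.le_add_left mb j, dvd_rfl⟩))
  have h₄ := (ha _ _).1 (hσ.trans (hσ.trans h₁ h₃) (hσ.symm h₂))
  rw [hda, natCong_zero_iff] at h₄
  omega

lemma exists_windowRel_of_eq_zero (hda : da = 0) (hdb : db = 0) :
    ∃ w, ∀ i j, σ (i, a) (j, b) ↔ windowRel (natCong ma da) (natCong mb db) w i j := by
  classical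
  subst hda hdb
  by_cases hne : ∃ i j, σ (i, a) (j, b)
  swap
  · push Not at hne
    exact ⟨∅, fun i j => by simpa [windowRel] using hne i j⟩
  obtain ⟨i₀, ⟨j₀, hj₀⟩, hmin⟩ : ∃ i₀, (∃ j₀, σ (i₀, a) (j₀, b)) ∧
      ∀ i j, σ (i, a) (j, b) → i₀ ≤ i :=
    ⟨Nat.find hne, Nat.find_spec hne, fun i j h => Nat.find_min' hne ⟨j, h⟩⟩
  refine ⟨{(i₀, j₀)}, fun i j => ⟨fun h => ?_, rel_of_windowRel hσ hs ha hb (by simpa)⟩⟩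
  have hle := hmin i j h
  have h' : σ (i, a) (j₀ + (i - i₀), b) := by
    simpa [Nat.add_sub_cancel' hle] using hs.add (i - i₀) hj₀
  have hj : j₀ + (i - i₀) = j := natCong_zero_iff.1 ((hb _ _).1 (hσ.trans (hσ.symm h') h))
  exact ⟨_, Finset.mem_singleton_self _, i - i₀, natCong_zero_iff.2 (by omega),
    natCong_zero_iff.2 hj⟩

lemma exists_windowRel_of_pos (hda : 0 < da) (hdb : 0 < db) :
    ∃ w, ∀ i j, σ (i, a) (j, b) ↔ windowRel (natCong ma da) (natCong mb db) w i j := by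
  classical
  refine ⟨((Finset.range (ma + da)) ×ˢ (Finset.range (mb + db))).filter
    (fun p => σ (p.1, a) (p.2, b)), fun i j => ⟨fun h => ?_,
      rel_of_windowRel hσ hs ha hb fun p hp => (Finset.mem_filter.1 hp).2⟩⟩
  obtain ⟨i₀, hi₀, hi⟩ := exists_lt_natCong (m := ma) hda i
  obtain ⟨j₀, hj₀, hj⟩ := exists_lt_natCong (m := mb) hdb j
  have h₀ : σ (i₀, a) (j₀, b) := hσ.trans (hσ.trans ((ha _ _).2 hi) h) (hσ.symm ((hb _ _).2 hj))
  exact ⟨(i₀, j₀), by simp [hi₀, hj₀, h₀], 0, hi, hj⟩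

theorem exists_windowRel :
    ∃ w, ∀ i j, σ (i, a) (j, b) ↔ windowRel (natCong ma da) (natCong mb db) w i j := by
  rcases Nat.eq_zero_or_pos da with hda | hda <;> rcases Nat.eq_zero_or_pos db with hdb | hdb
  · exact exists_windowRel_of_eq_zero hσ hs ha hb hda hdb
  · exact ⟨∅, fun i j => by
      simpa [windowRel] using not_rel_of_eq_zero_of_pos hσ hs ha hb hda hdb i j⟩
  · exact ⟨∅, fun i j => by
      simpa [windowRel] using
        fun h => not_rel_of_eq_zero_of_pos hσ hs hb ha hdb hda j i (hσ.symm h)⟩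
  · exact exists_windowRel_of_pos hσ hs ha hb hda hdb

end ShiftInvariant

theorem countable_setOf_shiftInvariant {X : Type*} [Finite X] :
    {σ : ℕ × X → ℕ × X → Prop | Equivalence σ ∧ ShiftInvariant σ}.Countable := by
  let decode : (X → ℕ × ℕ) × (X → X → Finset (ℕ × ℕ)) → ℕ × X → ℕ × X → Prop :=
    fun c x y => windowRel (natCong (c.1 x.2).1 (c.1 x.2).2) (natCong (c.1 y.2).1 (c.1 y.2).2)
      (c.2 x.2 y.2) x.1 y.1
  refine (Set.countable_range decode).mono ?_
  rintro σ ⟨hσ, hs⟩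
  have hcol : ∀ a, ∃ c : ℕ × ℕ, ∀ i j, σ (i, a) (j, a) ↔ natCong c.1 c.2 i j := by
    intro a
    obtain ⟨m, d, h⟩ := exists_eq_natCong (θ := fun i j => σ (i, a) (j, a))
      ⟨fun i => hσ.refl _, hσ.symm, hσ.trans⟩ fun i j => hs i j a a
    exact ⟨(m, d), fun i j => iff_of_eq (congrFun₂ h i j)⟩
  choose c hc using hcol
  choose w hw using fun a b => exists_windowRel hσ hs (hc a) (hc b)
  exact ⟨(c, w), funext₂ fun x y => propext (hw x.2 y.2 x.1 y.1).symm⟩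

instance : Finite (PM n) :=
  Finite.of_injective (fun s : PM n => s.r) fun _ _ h =>
    Setoid.ext fun x y => iff_of_eq (congrFun₂ h x y)

abbrev idPartition : PM n := Setoid.ker (Sum.elim id id)

def mergeTopMid : W n → V n
  | Sum.inl i => Sum.inl i
  | Sum.inr (Sum.inl i) => Sum.inl i
  | Sum.inr (Sum.inr i) => Sum.inr i

lemma conn_top_mid (α : PM n) (i : Fin n) :
    conn idPartition α (Sum.inl i) (Sum.inr (Sum.inl i)) :=
  Relation.EqvGen.rel _ _ (Or.inl ⟨Sum.inl i, Sum.inr i, rfl, rfl, rfl⟩)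

lemma conn_idPartition_iff (α : PM n) (x y : V n) :
    conn idPartition α (topBot x) (topBot y) ↔ α.r x y := by
  have hequiv : Equivalence fun u v : W n => α.r (mergeTopMid u) (mergeTopMid v) :=
    ⟨fun _ => α.iseqv.refl _, α.iseqv.symm, α.iseqv.trans⟩
  have hmid : ∀ x : V n, conn idPartition α (topBot x) (midBot x) := by
    rintro (i | i)
    · exact conn_top_mid α i
    · exact Relation.EqvGen.refl _
  constructor
  · intro h
    have hle : graphRel idPartition α ≤ fun u v => α.r (mergeTopMid u) (mergeTopMid v) := by
      rintro _ _ (⟨u, v, huv, rfl, rfl⟩ | ⟨u, v, huv, rfl, rfl⟩)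
      · have hmerge : ∀ u : V n, mergeTopMid (topMid u) = Sum.inl (Sum.elim id id u) := by
          rintro (i | i) <;> rfl
        show α.r (mergeTopMid (topMid u)) (mergeTopMid (topMid v))
        rw [hmerge, hmerge, show Sum.elim id id u = Sum.elim id id v from huv]
      · cases u <;> cases v <;> exact huv
    have := hequiv.eqvGen_iff.1 (Relation.EqvGen.mono hle _ _ h)
    cases x <;> cases y <;> exact this
  · intro h
    exact ((hmid x).trans _ _ _ (Relation.EqvGen.rel _ _ (Or.inr ⟨x, y, h, rfl, rfl⟩))).trans _ _ _
      ((hmid y).symm _ _)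

lemma idPartition_pmul (α : PM n) : pmul idPartition α = α :=
  Setoid.ext (conn_idPartition_iff α)

lemma Phi_idPartition (α : PM n) : Phi idPartition α = 0 := by
  rw [Phi, Nat.card_eq_zero]
  refine Or.inl ⟨fun ⟨c, hc⟩ => ?_⟩
  induction c using Quotient.inductionOn with
  | h x =>
    obtain ⟨i, rfl⟩ := hc x rfl
    obtain ⟨j, hj⟩ := hc (Sum.inl i) (Quotient.sound (conn_top_mid α i))
    exact Sum.inl_ne_inr hj

lemma tmul_idPartition (k i : ℕ) (α : PM n) : tmul (k, idPartition) (i, α) = (k + i, α) := by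
  rw [tmul, Phi_idPartition, idPartition_pmul, add_zero]

lemma IsCongruence.shiftInvariant {σ : ℕ × PM n → ℕ × PM n → Prop}
    (hσ : IsCongruence (tmul (n := n)) σ) : ShiftInvariant σ := by
  intro i j α β h
  simpa only [tmul_idPartition, add_comm 1] using (hσ.2 _ _ (1, idPartition) h).1

theorem countably_many_congruences_general (n : ℕ) :
    Set.Countable {σ : (ℕ × PM n) → (ℕ × PM n) → Prop | IsCongruence (tmul (n := n)) σ} :=
  countable_setOf_shiftInvariant.mono fun _ hσ => show _ ∧ _ from ⟨hσ.1, hσ.shiftInvariant⟩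

/-- For every `n ≥ 1`, the twisted partition monoid `P_n^Φ` has only
countably many congruences. -/
theorem countably_many_congruences (n : ℕ) (hn : 1 ≤ n) :
    Set.Countable {σ : (ℕ × PM n) → (ℕ × PM n) → Prop | IsCongruence (tmul (n := n)) σ} :=
  countably_many_congruences_general n

end TPM
end

section
/- Let n ≥ 1, let σ be a congruence on the twisted partition monoid P_n^Φ, and set θ_n := {(i,j) ∈ ℕ × ℕ : ((i,α),(j,α)) ∈ σ for some α ∈ D_n}. Then the quotient P_n^Φ/σ is finite (σ has finitely many classes) if and only if θ_n is not the equality relation Δ_ℕ on ℕ. -/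
namespace TPM

variable {n : ℕ}

/-! ### Auxiliary material for the proof -/

/-- Index of a vertex, forgetting the row. -/
def idx : V n → Fin n := Sum.elim id id

/-- The identity partition `1`, pairing `k` with `k'`. -/
def one (n : ℕ) : PM n :=
  ⟨fun x y => idx x = idx y,
   ⟨fun _ => rfl, fun h => h.symm, fun h h' => h.trans h'⟩⟩

/-- The flip (vertical reflection) of a partition. -/
def flipS (α : PM n) : PM n :=
  ⟨fun x y => α.r x.swap y.swap,
   ⟨fun _ => α.iseqv.refl _, fun h => α.iseqv.symm h, fun h h' => α.iseqv.trans h h'⟩⟩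

lemma finitePM : Finite (PM n) := by
  have hinj : Function.Injective (fun s : PM n => s.r) := by
    intro a b h
    exact Setoid.ext fun x y => iff_of_eq (congrFun (congrFun h x) y)
  exact Finite.of_injective _ hinj

/-- Collapsing map used to analyse `Γ(β, 1)`. -/
def fmap : W n → V n := Sum.elim Sum.inl (Sum.elim Sum.inr Sum.inr)

lemma conn_one_imp (β : PM n) {a b : W n} (h : conn β (one n) a b) :
    β.r (fmap a) (fmap b) := by
  induction h with
  | rel a b hab =>
    rcases hab with ⟨u, v, hr, rfl, rfl⟩ | ⟨u, v, hr, rfl, rfl⟩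
    · have e : ∀ u : V n, fmap (topMid u) = u := fun u => by cases u <;> rfl
      rw [e, e]; exact hr
    · have e : ∀ u : V n, fmap (midBot u) = Sum.inr (idx u) := fun u => by cases u <;> rfl
      rw [e, e]
      have hr' : idx u = idx v := hr
      rw [hr']
  | refl a => exact β.iseqv.refl _
  | symm _ _ _ ih => exact β.iseqv.symm ih
  | trans _ _ _ _ _ ih1 ih2 => exact β.iseqv.trans ih1 ih2

lemma pmul_one_right (β : PM n) : pmul β (one n) = β := by
  apply Setoid.ext
  intro x y
  constructor
  · intro h
    have h' : conn β (one n) (topBot x) (topBot y) := h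
    have := conn_one_imp β h'
    have ex : ∀ x : V n, fmap (topBot x) = x := fun x => by cases x <;> rfl
    rwa [ex, ex] at this
  · intro h
    have pathx : ∀ u : V n, conn β (one n) (topBot u) (topMid u) := by
      intro u
      cases u with
      | inl i => exact Relation.EqvGen.refl _
      | inr i =>
        exact Relation.EqvGen.symm _ _ (Relation.EqvGen.rel _ _
          (Or.inr ⟨Sum.inl i, Sum.inr i, rfl, rfl, rfl⟩))
    show conn β (one n) (topBot x) (topBot y)
    exact Relation.EqvGen.trans _ _ _ (pathx x)
      (Relation.EqvGen.trans _ _ _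
        (Relation.EqvGen.rel _ _ (Or.inl ⟨x, y, h, rfl, rfl⟩))
        (Relation.EqvGen.symm _ _ (pathx y)))

lemma phi_one_right (β : PM n) : Phi β (one n) = 0 := by
  have hempty : IsEmpty {c : Quotient (connSetoid β (one n)) //
      ∀ x : W n, Quotient.mk (connSetoid β (one n)) x = c → isMid x} := by
    constructor
    rintro ⟨c, hc⟩
    obtain ⟨x, rfl⟩ := c.exists_rep
    obtain ⟨k, rfl⟩ := hc x rfl
    have hedge : conn β (one n) (Sum.inr (Sum.inl k)) (Sum.inr (Sum.inr k)) :=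
      Relation.EqvGen.rel _ _ (Or.inr ⟨Sum.inl k, Sum.inr k, rfl, rfl, rfl⟩)
    obtain ⟨m, hm⟩ := hc (Sum.inr (Sum.inr k))
      (Quotient.sound (Relation.EqvGen.symm _ _ hedge))
    simp at hm
  rw [Phi]
  exact Nat.card_of_isEmpty

lemma rnk_one : rnk (one n) = n := by
  have e : Quotient (one n) ≃ Fin n :=
    { toFun := Quotient.lift idx fun a b h => h
      invFun := fun k => Quotient.mk (one n) (Sum.inl k)
      left_inv := by
        intro q
        induction q using Quotient.ind with
        | _ x => exact Quotient.sound (rfl : idx (Sum.inl (idx x)) = idx x)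
      right_inv := fun k => rfl }
  have e2 : {c : Quotient (one n) //
      (∃ i : Fin n, Quotient.mk (one n) (Sum.inl i) = c) ∧
      ∃ i : Fin n, Quotient.mk (one n) (Sum.inr i) = c} ≃ Quotient (one n) :=
    Equiv.subtypeUnivEquiv (by
      intro c
      induction c using Quotient.ind with
      | _ x =>
        cases x with
        | inl i =>
          exact ⟨⟨i, rfl⟩, ⟨i, Quotient.sound (rfl : idx (Sum.inr i) = idx (Sum.inl i))⟩⟩
        | inr i =>
          exact ⟨⟨i, Quotient.sound (rfl : idx (Sum.inl i) = idx (Sum.inr i))⟩, ⟨i, rfl⟩⟩)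
  rw [rnk, Nat.card_congr (e2.trans e)]
  simp

lemma rankn_struct {α : PM n} (hα : rnk α = n) :
    (∀ j j' : Fin n, α.r (Sum.inr j) (Sum.inr j') → j = j') ∧
    (∀ j : Fin n, ∃ i, α.r (Sum.inl i) (Sum.inr j)) := by
  classical
  have hT : Nat.card {c : Quotient α //
      (∃ i : Fin n, Quotient.mk α (Sum.inl i) = c) ∧
      ∃ i : Fin n, Quotient.mk α (Sum.inr i) = c} = n := hα
  set T := {c : Quotient α //
      (∃ i : Fin n, Quotient.mk α (Sum.inl i) = c) ∧
      ∃ i : Fin n, Quotient.mk α (Sum.inr i) = c} with hTdef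
  let w : T → Fin n := fun c => c.2.2.choose
  have hw : ∀ c : T, Quotient.mk α (Sum.inr (w c)) = c.1 := fun c => c.2.2.choose_spec
  have winj : Function.Injective w := by
    intro c c' h
    apply Subtype.ext
    rw [← hw c, ← hw c', h]
  have wbij : Function.Bijective w := by
    rw [Nat.bijective_iff_injective_and_card]
    refine ⟨winj, ?_⟩
    rw [hT]
    simp
  have P4 : ∀ j : Fin n, ∃ i, α.r (Sum.inl i) (Sum.inr j) := by
    intro j
    obtain ⟨c, hc⟩ := wbij.surjective j
    obtain ⟨i, hi⟩ := c.2.1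
    have h1 : Quotient.mk α (Sum.inr j) = c.1 := by rw [← hc]; exact hw c
    exact ⟨i, Quotient.exact (hi.trans h1.symm)⟩
  refine ⟨?_, P4⟩
  let v : Fin n → T := fun j => ⟨Quotient.mk α (Sum.inr j),
    ⟨(P4 j).choose, Quotient.sound (P4 j).choose_spec⟩, ⟨j, rfl⟩⟩
  have vsurj : Function.Surjective v := fun c => ⟨w c, Subtype.ext (hw c)⟩
  have vbij : Function.Bijective v := by
    rw [Nat.bijective_iff_surjective_and_card]
    refine ⟨vsurj, ?_⟩
    rw [hT]
    simp
  intro j j' h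
  exact vbij.injective (Subtype.ext (Quotient.sound h))

/-- Invariant map used to analyse `Γ(flip α, α)`. -/
def hmap (α : PM n) : W n → Quotient α :=
  Sum.elim (fun i => Quotient.mk α (Sum.inr i))
    (Sum.elim (fun k => Quotient.mk α (Sum.inl k)) (fun j => Quotient.mk α (Sum.inr j)))

lemma conn_flip_imp (α : PM n) {a b : W n} (h : conn (flipS α) α a b) :
    hmap α a = hmap α b := by
  induction h with
  | rel a b hab =>
    rcases hab with ⟨u, v, hr, rfl, rfl⟩ | ⟨u, v, hr, rfl, rfl⟩
    · have e : ∀ u : V n, hmap α (topMid u) = Quotient.mk α u.swap := fun u => by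
        cases u <;> rfl
      rw [e, e]
      exact Quotient.sound hr
    · have e : ∀ u : V n, hmap α (midBot u) = Quotient.mk α u := fun u => by
        cases u <;> rfl
      rw [e, e]
      exact Quotient.sound hr
  | refl a => rfl
  | symm _ _ _ ih => exact ih.symm
  | trans _ _ _ _ _ ih1 ih2 => exact ih1.trans ih2

lemma pmul_flip {α : PM n} (hα : rnk α = n) : pmul (flipS α) α = one n := by
  obtain ⟨P2, P4⟩ := rankn_struct hα
  apply Setoid.ext
  intro x y
  constructor
  · intro h
    have h' : conn (flipS α) α (topBot x) (topBot y) := h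
    have hinv := conn_flip_imp α h'
    have et : ∀ x : V n, hmap α (topBot x) = Quotient.mk α (Sum.inr (idx x)) := fun x => by
      cases x <;> rfl
    rw [et, et] at hinv
    exact P2 _ _ (Quotient.exact hinv)
  · intro h
    have h' : idx x = idx y := h
    have path : ∀ x : V n, conn (flipS α) α (topBot x) (Sum.inl (idx x)) := by
      intro x
      cases x with
      | inl i => exact Relation.EqvGen.refl _
      | inr j =>
        obtain ⟨k, hk⟩ := P4 j
        have e1 : conn (flipS α) α (Sum.inr (Sum.inl k)) (Sum.inr (Sum.inr j)) :=
          Relation.EqvGen.rel _ _ (Or.inr ⟨Sum.inl k, Sum.inr j, hk, rfl, rfl⟩)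
        have e2 : conn (flipS α) α (Sum.inl j) (Sum.inr (Sum.inl k)) :=
          Relation.EqvGen.rel _ _ (Or.inl ⟨Sum.inl j, Sum.inr k, α.iseqv.symm hk, rfl, rfl⟩)
        exact Relation.EqvGen.trans _ _ _ (Relation.EqvGen.symm _ _ e1)
          (Relation.EqvGen.symm _ _ e2)
    show conn (flipS α) α (topBot x) (topBot y)
    have hy := Relation.EqvGen.symm _ _ (path y)
    rw [← h'] at hy
    exact Relation.EqvGen.trans _ _ _ (path x) hy

lemma finite_of_step {σ : (ℕ × PM n) → (ℕ × PM n) → Prop}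
    (hσ : IsCongruence (tmul (n := n)) σ) {N d : ℕ} (hd : 0 < d)
    (h : σ (N, one n) (N + d, one n)) :
    Finite (Quotient (⟨σ, hσ.1⟩ : Setoid (ℕ × PM n))) := by
  have step : ∀ (k : ℕ) (β : PM n), σ (k + N, β) (k + N + d, β) := by
    intro k β
    have h1 := (hσ.2 (N, one n) (N + d, one n) (k, β) h).1
    simpa [tmul, pmul_one_right, phi_one_right, Nat.add_assoc] using h1
  have claim : ∀ (k : ℕ) (β : PM n), ∃ k', k' < N + d ∧ σ (k', β) (k, β) := by
    intro k
    induction k using Nat.strong_induction_on with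
    | _ k ih =>
      intro β
      by_cases hk : k < N + d
      · exact ⟨k, hk, hσ.1.refl _⟩
      · push_neg at hk
        have hkd : k - d < k := by omega
        obtain ⟨k', hk', hs⟩ := ih (k - d) hkd β
        have hstep : σ (k - d, β) (k, β) := by
          have h2 := step (k - d - N) β
          have e1 : k - d - N + N = k - d := by omega
          rw [e1, show k - d + d = k by omega] at h2
          exact h2
        exact ⟨k', hk', hσ.1.trans hs hstep⟩
  haveI : Finite (PM n) := finitePM
  apply Finite.of_surjective (fun p : Fin (N + d) × PM n =>
    Quotient.mk (⟨σ, hσ.1⟩ : Setoid (ℕ × PM n)) (p.1.1, p.2))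
  intro q
  induction q using Quotient.ind with
  | _ a =>
    obtain ⟨k', hk', hs⟩ := claim a.1 a.2
    exact ⟨(⟨k', hk'⟩, a.2), Quotient.sound hs⟩

/-- For a congruence `σ` on `P_n^Φ` (`n ≥ 1`), the quotient `P_n^Φ/σ`
is finite if and only if `θ_n := {(i,j) : ((i,α),(j,α)) ∈ σ for some α ∈ D_n}` is not the
equality relation on `ℕ`. -/
theorem finite_quotient_iff (n : ℕ) (hn : 1 ≤ n)
    (σ : (ℕ × PM n) → (ℕ × PM n) → Prop) (hσ : IsCongruence (tmul (n := n)) σ) :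
    Finite (Quotient (⟨σ, hσ.1⟩ : Setoid (ℕ × PM n))) ↔
      (fun i j => ∃ α : PM n, rnk α = n ∧ σ (i, α) (j, α)) ≠ (fun i j => i = j) := by
  constructor
  · intro hfin heq
    haveI := hfin
    have hinj : Function.Injective
        (fun k : ℕ => Quotient.mk (⟨σ, hσ.1⟩ : Setoid (ℕ × PM n)) (k, one n)) := by
      intro k l h
      have hs : σ (k, one n) (l, one n) := Quotient.exact h
      have hθ : ∃ α : PM n, rnk α = n ∧ σ (k, α) (l, α) := ⟨one n, rnk_one, hs⟩
      exact (congrFun (congrFun heq k) l) ▸ hθ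
    haveI : Finite ℕ := Finite.of_injective _ hinj
    exact not_finite ℕ
  · intro hne
    have hex : ∃ i j, i ≠ j ∧ ∃ α : PM n, rnk α = n ∧ σ (i, α) (j, α) := by
      by_contra hcon
      push_neg at hcon
      apply hne
      funext i j
      apply propext
      constructor
      · rintro ⟨α, hα, hs⟩
        by_contra hij
        exact (hcon i j hij) α hα hs
      · rintro rfl
        exact ⟨one n, rnk_one, hσ.1.refl _⟩
    obtain ⟨i, j, hij, α, hα, hs⟩ := hex
    have hone := pmul_flip hα
    have h1 := (hσ.2 (i, α) (j, α) (0, flipS α) hs).1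
    obtain ⟨c, h2⟩ : ∃ c, σ (i + c, one n) (j + c, one n) :=
      ⟨Phi (flipS α) α, by simpa [tmul, hone] using h1⟩
    obtain ⟨N, d, hd, hσN⟩ : ∃ N d, 0 < d ∧ σ (N, one n) (N + d, one n) := by
      rcases Nat.lt_or_ge i j with hlt | hge
      · refine ⟨i + c, j - i, by omega, ?_⟩
        rw [show i + c + (j - i) = j + c by omega]
        exact h2
      · have hlt : j < i := lt_of_le_of_ne hge (Ne.symm hij)
        refine ⟨j + c, i - j, by omega, ?_⟩
        rw [show j + c + (i - j) = i + c by omega]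
        exact hσ.1.symm h2
    exact finite_of_step hσ hd hσN

end TPM
end

section
/- Let n ≥ 1. The relation σ on the twisted partition monoid P_n^Φ consisting of all pairs ((i,α),(i,α)) together with all pairs ((i,α),(j,β)) with i,j ∈ ℕ, α,β ∈ I_1, α̂ = β̂ and rank α − rank β = i − j (as integers), is a congruence on P_n^Φ. -/
/-!
If `α` has rank one, with `a` and `b'` in its transversal, then every edge of `Γ(γ,α)` that is not
an edge of `Γ(γ,α̂)` lies inside that transversal, so the components of `Γ(γ,α)` are those of
`Γ(γ,α̂)` with the components of `a''` and `b'` merged. The component of `b'` lies in the bottom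
row, and the component `C` of `a''` has no bottom vertex. If `C` is floating, the merge destroys
one floating component and `γα` has rank zero; otherwise `C` meets the top row and the merge
creates the only transversal of `γα`. Either way
`rank(γα) + Φ(γ,α̂) = Φ(γ,α) + rank α` and `hat(γα) = hat(γα̂)`, trivially so when `rank α = 0`.
Since `Φ(γ,α̂)` and `γα̂` depend on `α̂` only, left multiplication preserves the relation; right
multiplication follows by the anti-involution reflecting partitions top to bottom.
-/

open Sum

theorem card_subtype_quotient_congr {X Y : Type*} {t : Setoid X} {s : Setoid Y} (e : X ≃ Y)
    (he : ∀ a b, t a b ↔ s (e a) (e b)) {P : Quotient t → Prop} {Q : Quotient s → Prop}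
    (h : ∀ x, P (Quotient.mk _ x) ↔ Q (Quotient.mk _ (e x))) :
    Nat.card {c // P c} = Nat.card {c // Q c} :=
  Nat.card_congr <| (Quotient.congr e he).subtypeEquiv fun c => Quotient.inductionOn c h

namespace Setoid

variable {X : Type*}

def merge (s : Setoid X) (p q : X) : Setoid X where
  r x y := s x y ∨ ((s x p ∨ s x q) ∧ (s y p ∨ s y q))
  iseqv := by
    have near {x y} (h : s x y) : (s x p ∨ s x q) ↔ (s y p ∨ s y q) :=
      ⟨Or.imp (s.trans (s.symm h)) (s.trans (s.symm h)), Or.imp (s.trans h) (s.trans h)⟩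
    refine ⟨fun x => Or.inl (s.refl x), fun h => h.imp s.symm And.symm, ?_⟩
    rintro x y z (hxy | ⟨hx, hy⟩) (hyz | ⟨hy', hz⟩)
    · exact Or.inl (s.trans hxy hyz)
    · exact Or.inr ⟨(near hxy).2 hy', hz⟩
    · exact Or.inr ⟨hx, (near hyz).1 hy⟩
    · exact Or.inr ⟨hx, hz⟩

def classIn (s : Setoid X) (P : X → Prop) (c : Quotient s) : Prop :=
  ∀ x, Quotient.mk s x = c → P x

variable {s : Setoid X} {P : X → Prop} {p q : X}

lemma classIn_mk_iff {x : X} : classIn s P (Quotient.mk s x) ↔ ∀ y, s y x → P y :=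
  ⟨fun h y hy => h y (Quotient.sound hy), fun h y hy => h y (Quotient.exact hy)⟩

lemma merge_iff_of_forall {x y : X} (hq : ¬ ∀ z, s z q → P z)
    (hx : ∀ z, s z x → P z) (hxp : ¬ s x p) : s.merge p q x y ↔ s x y := by
  refine ⟨?_, Or.inl⟩
  rintro (h | ⟨h | h, -⟩)
  · exact h
  · exact absurd h hxp
  · exact absurd (fun z hz => hx z (s.trans hz (s.symm h))) hq

theorem card_classIn_merge [Finite X] [Decidable (∀ z, s z p → P z)] (hq : ¬ ∀ z, s z q → P z) :
    Nat.card {c // classIn s P c} =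
      Nat.card {c // classIn (s.merge p q) P c} + if ∀ z, s z p → P z then 1 else 0 := by
  set A := {c | classIn s P c}
  have hA : (A \ {Quotient.mk s p}).ncard + (if ∀ z, s z p → P z then 1 else 0) = A.ncard := by
    split_ifs with hp
    · exact Set.ncard_sdiff_singleton_add_one (classIn_mk_iff.2 hp)
    · rw [Set.sdiff_singleton_eq_self (mt classIn_mk_iff.1 hp), add_zero]
  have hB : (A \ {Quotient.mk s p}).ncard = {c | classIn (s.merge p q) P c}.ncard := by
    refine Set.ncard_congr (fun c _ => Quotient.map id (fun _ _ => Or.inl) c) ?_ ?_ ?_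
    · rintro ⟨x⟩ ⟨hx, hxp⟩
      have hx' := classIn_mk_iff.1 hx
      refine classIn_mk_iff.2 fun y hy => hx' y (s.symm ?_)
      exact (merge_iff_of_forall hq hx' fun h => hxp (Quotient.sound h)).1 ((s.merge p q).symm hy)
    · rintro ⟨x⟩ ⟨y⟩ ⟨hx, hxp⟩ - h
      exact Quotient.sound ((merge_iff_of_forall hq (classIn_mk_iff.1 hx)
        fun h => hxp (Quotient.sound h)).1 (Quotient.exact h))
    · rintro ⟨x⟩ hx
      have hx' := classIn_mk_iff.1 hx
      refine ⟨Quotient.mk s x, ⟨classIn_mk_iff.2 fun y hy => hx' y (Or.inl hy), ?_⟩, rfl⟩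
      intro hxp
      exact hq fun z hz => hx' z (Or.inr ⟨Or.inr hz, Or.inl (Quotient.exact hxp)⟩)
  change Nat.card A = Nat.card {c | classIn (s.merge p q) P c} + _
  rw [Nat.card_coe_set_eq, Nat.card_coe_set_eq, ← hA, hB]

end Setoid

namespace TPM

variable {n : ℕ}

section Rank

variable {α : PM n}

lemma rnk_eq_zero_iff : rnk α = 0 ↔ ∀ i j, ¬ α (inl i) (inr j) := by
  rw [rnk, Finite.card_eq_zero_iff, isEmpty_subtype]
  constructor
  · intro h i j hij
    exact h _ ⟨⟨i, rfl⟩, j, (Quotient.sound hij).symm⟩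
  · rintro h _ ⟨⟨i, rfl⟩, j, hj⟩
    exact h i j (Quotient.exact hj.symm)

lemma rnk_eq_zero_iff_side : rnk α = 0 ↔ ∀ u v, α u v → side u = side v := by
  rw [rnk_eq_zero_iff]
  constructor
  · rintro h (i | j) (i' | j') huv <;> simp only [side]
    · exact (h i j' huv).elim
    · exact (h i' j (α.symm huv)).elim
  · intro h i j hij
    simpa [side] using h _ _ hij

lemma rnk_le_one_iff : rnk α ≤ 1 ↔
    ∀ i j i' j', α (inl i) (inr j) → α (inl i') (inr j') → α (inl i) (inl i') := by
  rw [rnk, Finite.card_le_one_iff_subsingleton]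
  constructor
  · intro h i j i' j' hij hij'
    have := h.elim ⟨_, ⟨i, rfl⟩, j, (Quotient.sound hij).symm⟩
      ⟨_, ⟨i', rfl⟩, j', (Quotient.sound hij').symm⟩
    exact Quotient.exact (congrArg Subtype.val this)
  · refine fun h => ⟨?_⟩
    rintro ⟨_, ⟨i, rfl⟩, j, hj⟩ ⟨_, ⟨i', rfl⟩, j', hj'⟩
    exact Subtype.ext <| Quotient.sound <|
      h i j i' j' (Quotient.exact hj.symm) (Quotient.exact hj'.symm)

lemma rnk_hat : rnk (hat α) = 0 :=
  rnk_eq_zero_iff_side.2 fun _ _ h => h.2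

lemma hat_eq_self_of_rnk_eq_zero (h : rnk α = 0) : hat α = α :=
  Setoid.ext fun _ _ => ⟨And.left, fun huv => ⟨huv, rnk_eq_zero_iff_side.1 h _ _ huv⟩⟩

/-- `α` has exactly one transversal, and it contains `a0` and `b0'`. -/
structure OnlyTransversal (α : PM n) (a0 b0 : Fin n) : Prop where
  rel : α (inl a0) (inr b0)
  rel_of_side_ne {u v : V n} : α u v → side u ≠ side v → α u (inl a0)

lemma rnk_eq_zero_or_onlyTransversal (h : rnk α ≤ 1) :
    rnk α = 0 ∨ ∃ a0 b0, OnlyTransversal α a0 b0 := by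
  by_cases h0 : rnk α = 0
  · exact Or.inl h0
  obtain ⟨a0, b0, hab⟩ : ∃ a0 b0, α (inl a0) (inr b0) := by
    simpa [rnk_eq_zero_iff] using h0
  refine Or.inr ⟨a0, b0, hab, ?_⟩
  rintro (i | j) (i' | j') huv hs <;> simp only [side, ne_eq, not_true_eq_false] at hs
  · exact rnk_le_one_iff.1 h i j' a0 b0 huv hab
  · exact α.trans huv (rnk_le_one_iff.1 h i' j a0 b0 (α.symm huv) hab)

lemma OnlyTransversal.rnk_eq_one {a0 b0 : Fin n} (ht : OnlyTransversal α a0 b0)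
    (h : rnk α ≤ 1) : rnk α = 1 := by
  have : rnk α ≠ 0 := fun h0 => rnk_eq_zero_iff.1 h0 a0 b0 ht.rel
  omega

end Rank

section Graph

variable {γ δ : PM n}

def isBot : W n → Prop
  | inr (inr _) => True
  | _ => False

lemma connSetoid_le_of_graphRel {s : Setoid (W n)} (h : ∀ x y, graphRel γ δ x y → s x y) :
    connSetoid γ δ ≤ s :=
  Setoid.eqvGen_le h

lemma connSetoid_mono {δ' : PM n} (h : δ' ≤ δ) : connSetoid γ δ' ≤ connSetoid γ δ :=
  connSetoid_le_of_graphRel fun _ _ e => Relation.EqvGen.rel _ _ <|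
    e.imp id fun ⟨u, v, huv, hx, hy⟩ => ⟨u, v, h huv, hx, hy⟩

lemma isBot_iff_of_connSetoid (hδ : rnk δ = 0) {x y : W n} (h : connSetoid γ δ x y) :
    isBot x ↔ isBot y := by
  refine (Setoid.ker_def.1 (connSetoid_le_of_graphRel (s := Setoid.ker isBot) ?_ h)).to_iff
  rintro _ _ (⟨u, v, -, rfl, rfl⟩ | ⟨u, v, huv, rfl, rfl⟩)
  · rcases u with i | i <;> rcases v with j | j <;> rfl
  · have := rnk_eq_zero_iff_side.1 hδ u v huv
    rcases u with i | i <;> rcases v with j | j <;> first | rfl | simp [side] at this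

lemma rnk_pmul_eq_zero_of_right (hδ : rnk δ = 0) : rnk (pmul γ δ) = 0 :=
  rnk_eq_zero_iff.2 fun i j h => by
    simpa [isBot, topBot] using isBot_iff_of_connSetoid hδ h

end Graph

namespace OnlyTransversal

variable {γ α : PM n} {a0 b0 : Fin n}

lemma connSetoid_eq (ht : OnlyTransversal α a0 b0) :
    connSetoid γ α = (connSetoid γ (hat α)).merge (inr (inl a0)) (inr (inr b0)) := by
  set s := connSetoid γ (hat α)
  have hs : s ≤ connSetoid γ α := connSetoid_mono fun _ _ h => h.1
  have near_midBot {u : V n} (hu : α u (inl a0)) :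
      s (midBot u) (inr (inl a0)) ∨ s (midBot u) (inr (inr b0)) := by
    rcases u with i | j
    · exact Or.inl (Relation.EqvGen.rel _ _ (Or.inr ⟨inl i, inl a0, ⟨hu, rfl⟩, rfl, rfl⟩))
    · exact Or.inr (Relation.EqvGen.rel _ _
        (Or.inr ⟨inr j, inr b0, ⟨α.trans hu ht.rel, rfl⟩, rfl, rfl⟩))
  apply le_antisymm
  · refine connSetoid_le_of_graphRel ?_
    rintro _ _ (⟨u, v, huv, rfl, rfl⟩ | ⟨u, v, huv, rfl, rfl⟩)
    · exact Or.inl (Relation.EqvGen.rel _ _ (Or.inl ⟨u, v, huv, rfl, rfl⟩))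
    by_cases hside : side u = side v
    · exact Or.inl (Relation.EqvGen.rel _ _ (Or.inr ⟨u, v, ⟨huv, hside⟩, rfl, rfl⟩))
    · exact Or.inr ⟨near_midBot (ht.rel_of_side_ne huv hside),
        near_midBot (ht.rel_of_side_ne (α.symm huv) (Ne.symm hside))⟩
  · have hpq : connSetoid γ α (inr (inl a0)) (inr (inr b0)) :=
      Relation.EqvGen.rel _ _ (Or.inr ⟨inl a0, inr b0, ht.rel, rfl, rfl⟩)
    have to_mid {x : W n} (hx : s x (inr (inl a0)) ∨ s x (inr (inr b0))) :
        connSetoid γ α x (inr (inl a0)) :=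
      hx.elim (hs ·) fun h => (connSetoid γ α).trans (hs h) ((connSetoid γ α).symm hpq)
    rintro x y (h | ⟨hx, hy⟩)
    · exact hs h
    · exact (connSetoid γ α).trans (to_mid hx) ((connSetoid γ α).symm (to_mid hy))

lemma pmul_rel_iff (ht : OnlyTransversal α a0 b0) {u v : V n} :
    pmul γ α u v ↔
      (connSetoid γ (hat α)).merge (inr (inl a0)) (inr (inr b0)) (topBot u) (topBot v) := by
  change connSetoid γ α (topBot u) (topBot v) ↔ _
  rw [ht.connSetoid_eq]

lemma connSetoid_hat_of_pmul (ht : OnlyTransversal α a0 b0) {i j : Fin n}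
    (h : pmul γ α (inl i) (inr j)) : connSetoid γ (hat α) (inl i) (inr (inl a0)) := by
  have not_rel {y : W n} (hy : isBot y) : ¬ connSetoid γ (hat α) (inl i) y :=
    mt (isBot_iff_of_connSetoid rnk_hat) fun h => h.2 hy
  rcases ht.pmul_rel_iff.1 h with h | ⟨h | h, -⟩
  · exact absurd h (not_rel trivial)
  · exact h
  · exact absurd h (not_rel trivial)

lemma rnk_pmul_le_one (ht : OnlyTransversal α a0 b0) : rnk (pmul γ α) ≤ 1 :=
  rnk_le_one_iff.2 fun _ _ _ _ h h' => ht.pmul_rel_iff.2 <| Or.inl <|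
    (connSetoid γ (hat α)).trans (ht.connSetoid_hat_of_pmul h)
      ((connSetoid γ (hat α)).symm (ht.connSetoid_hat_of_pmul h'))

lemma rnk_pmul_eq_zero_iff (ht : OnlyTransversal α a0 b0) :
    rnk (pmul γ α) = 0 ↔ ∀ x, connSetoid γ (hat α) x (inr (inl a0)) → isMid x := by
  rw [rnk_eq_zero_iff]
  constructor
  · rintro h (i | i | j) hx
    · refine (h i b0 (ht.pmul_rel_iff.2 (Or.inr ⟨Or.inl hx, Or.inr ?_⟩))).elim
      exact (connSetoid γ (hat α)).refl _
    · exact ⟨i, rfl⟩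
    · simpa [isBot] using isBot_iff_of_connSetoid rnk_hat hx
  · intro h i j hij
    obtain ⟨k, hk⟩ := h _ (ht.connSetoid_hat_of_pmul hij)
    cases hk

lemma hat_pmul_hat (ht : OnlyTransversal α a0 b0) : hat (pmul γ (hat α)) = hat (pmul γ α) := by
  refine Setoid.ext fun u v => and_congr_left fun hside => ?_
  rw [ht.pmul_rel_iff]
  refine ⟨Or.inl, ?_⟩
  set s := connSetoid γ (hat α)
  have not_rel {x y : W n} (h : ¬ (isBot x ↔ isBot y)) : ¬ s x y :=
    mt (isBot_iff_of_connSetoid rnk_hat) h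
  rintro (h | ⟨hu, hv⟩)
  · exact h
  rcases u with i | j <;> rcases v with i' | j' <;> simp only [side, reduceCtorEq] at hside
  · have hu' := hu.resolve_right (not_rel (by simp [isBot, topBot]))
    have hv' := hv.resolve_right (not_rel (by simp [isBot, topBot]))
    exact s.trans hu' (s.symm hv')
  · have hu' := hu.resolve_left (not_rel (by simp [isBot, topBot]))
    have hv' := hv.resolve_left (not_rel (by simp [isBot, topBot]))
    exact s.trans hu' (s.symm hv')

open Classical in
lemma Phi_hat (ht : OnlyTransversal α a0 b0) :
    Phi γ (hat α) = Phi γ α +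
      if ∀ x, connSetoid γ (hat α) x (inr (inl a0)) → isMid x then 1 else 0 := by
  unfold Phi
  rw [ht.connSetoid_eq]
  refine Setoid.card_classIn_merge (s := connSetoid γ (hat α)) (P := isMid) fun h => ?_
  obtain ⟨k, hk⟩ := h _ ((connSetoid γ (hat α)).refl (inr (inr b0)))
  cases hk

lemma rnk_pmul_add_Phi_hat (ht : OnlyTransversal α a0 b0) :
    rnk (pmul γ α) + Phi γ (hat α) = Phi γ α + 1 := by
  rw [ht.Phi_hat]
  split_ifs with h
  · rw [ht.rnk_pmul_eq_zero_iff.2 h, zero_add]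
  · have := ht.rnk_pmul_le_one (γ := γ)
    have := mt ht.rnk_pmul_eq_zero_iff.1 h
    omega

end OnlyTransversal

section RankLeOne

variable {γ α : PM n}

lemma hat_pmul_hat (hα : rnk α ≤ 1) : hat (pmul γ (hat α)) = hat (pmul γ α) := by
  obtain h0 | ⟨_, _, ht⟩ := rnk_eq_zero_or_onlyTransversal hα
  · rw [hat_eq_self_of_rnk_eq_zero h0]
  · exact ht.hat_pmul_hat

lemma rnk_pmul_le_one (hα : rnk α ≤ 1) : rnk (pmul γ α) ≤ 1 := by
  obtain h0 | ⟨_, _, ht⟩ := rnk_eq_zero_or_onlyTransversal hα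
  · rw [rnk_pmul_eq_zero_of_right h0]
    exact zero_le_one
  · exact ht.rnk_pmul_le_one

lemma rnk_pmul_add_Phi_hat (hα : rnk α ≤ 1) :
    rnk (pmul γ α) + Phi γ (hat α) = Phi γ α + rnk α := by
  obtain h0 | ⟨_, _, ht⟩ := rnk_eq_zero_or_onlyTransversal hα
  · rw [hat_eq_self_of_rnk_eq_zero h0, rnk_pmul_eq_zero_of_right h0, h0, zero_add, add_zero]
  · rw [ht.rnk_pmul_add_Phi_hat, ht.rnk_eq_one hα]

end RankLeOne

section Dual

abbrev dual (α : PM n) : PM n := α.comap Sum.swap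

def dualW : W n → W n
  | inl i => inr (inr i)
  | inr (inl i) => inr (inl i)
  | inr (inr i) => inl i

@[simp]
lemma dual_rel {α : PM n} {u v : V n} : dual α u v ↔ α u.swap v.swap := Iff.rfl

lemma dualW_involutive : Function.Involutive (dualW (n := n)) := by
  rintro (i | i | i) <;> rfl

lemma dual_dual (α : PM n) : dual (dual α) = α :=
  Setoid.ext fun _ _ => by simp

lemma hat_dual (α : PM n) : hat (dual α) = dual (hat α) :=
  Setoid.ext fun u v => and_congr_right fun _ => by
    rcases u with i | i <;> rcases v with j | j <;> simp [side]

lemma isMid_dualW (x : W n) : isMid (dualW x) ↔ isMid x := by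
  rcases x with i | i | i <;> simp [dualW, isMid]

lemma graphRel_dual {α β : PM n} {x y : W n} (h : graphRel α β x y) :
    graphRel (dual β) (dual α) (dualW x) (dualW y) := by
  rcases h with ⟨u, v, huv, rfl, rfl⟩ | ⟨u, v, huv, rfl, rfl⟩
  · refine Or.inr ⟨u.swap, v.swap, by simpa using huv, ?_, ?_⟩ <;> cases u <;> cases v <;> rfl
  · refine Or.inl ⟨u.swap, v.swap, by simpa using huv, ?_, ?_⟩ <;> cases u <;> cases v <;> rfl

lemma connSetoid_le_comap_dual (α β : PM n) :
    connSetoid α β ≤ (connSetoid (dual β) (dual α)).comap dualW :=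
  connSetoid_le_of_graphRel fun _ _ h => Relation.EqvGen.rel _ _ (graphRel_dual h)

lemma connSetoid_dual (α β : PM n) :
    connSetoid (dual β) (dual α) = (connSetoid α β).comap dualW := by
  refine le_antisymm ?_ fun x y h => ?_
  · simpa only [dual_dual] using connSetoid_le_comap_dual (dual β) (dual α)
  · simpa only [Setoid.comap_rel, dualW_involutive x, dualW_involutive y] using
      connSetoid_le_comap_dual α β h

lemma pmul_dual (α β : PM n) : dual (pmul α β) = pmul (dual β) (dual α) := by
  refine Setoid.ext fun u v => ?_
  change connSetoid α β (topBot u.swap) (topBot v.swap) ↔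
    connSetoid (dual β) (dual α) (topBot u) (topBot v)
  rw [connSetoid_dual, Setoid.comap_rel]
  rcases u with i | i <;> rcases v with j | j <;> rfl

lemma Phi_dual (α β : PM n) : Phi (dual β) (dual α) = Phi α β := by
  let e := dualW_involutive.toPerm (dualW (n := n))
  have he (a b : W n) : connSetoid (dual β) (dual α) a b ↔ connSetoid α β (e a) (e b) := by
    rw [connSetoid_dual]
    rfl
  refine card_subtype_quotient_congr e he fun x => ?_
  change Setoid.classIn _ isMid _ ↔ Setoid.classIn _ isMid _
  rw [Setoid.classIn_mk_iff, Setoid.classIn_mk_iff]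
  exact e.forall_congr fun y => by rw [he]; exact imp_congr_right fun _ => (isMid_dualW y).symm

lemma rnk_dual (α : PM n) : rnk (dual α) = rnk α := by
  refine card_subtype_quotient_congr (Equiv.sumComm _ _) (fun _ _ => Iff.rfl) fun x => ?_
  simp only [Quotient.eq, dual_rel, Equiv.sumComm_apply, Sum.swap_inl, Sum.swap_inr]
  exact and_comm

end Dual

def hatRankRel (a b : ℕ × PM n) : Prop :=
  a = b ∨
    (rnk a.2 ≤ 1 ∧ rnk b.2 ≤ 1 ∧ hat a.2 = hat b.2 ∧
      (rnk a.2 : ℤ) - (rnk b.2 : ℤ) = (a.1 : ℤ) - (b.1 : ℤ))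

lemma hatRankRel_equivalence : Equivalence (hatRankRel (n := n)) where
  refl _ := Or.inl rfl
  symm := by
    rintro x y (rfl | ⟨hx, hy, hxy, hd⟩)
    · exact Or.inl rfl
    · exact Or.inr ⟨hy, hx, hxy.symm, by omega⟩
  trans := by
    rintro x y z (rfl | ⟨hx, hy, hxy, hd⟩) hyz
    · exact hyz
    rcases hyz with rfl | ⟨-, hz, hyz, hd'⟩
    · exact Or.inr ⟨hx, hy, hxy, hd⟩
    · exact Or.inr ⟨hx, hz, hxy.trans hyz, by omega⟩

lemma hatRankRel.tmul_left (a : ℕ × PM n) {x y : ℕ × PM n} (h : hatRankRel x y) :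
    hatRankRel (tmul a x) (tmul a y) := by
  rcases h with rfl | ⟨hx, hy, hxy, hd⟩
  · exact Or.inl rfl
  have ex := rnk_pmul_add_Phi_hat (γ := a.2) hx
  have ey := rnk_pmul_add_Phi_hat (γ := a.2) hy
  rw [hxy] at ex
  refine Or.inr ⟨rnk_pmul_le_one hx, rnk_pmul_le_one hy, ?_, ?_⟩
  · rw [tmul, tmul, ← hat_pmul_hat hx, ← hat_pmul_hat hy, hxy]
  · simp only [tmul]
    push_cast
    omega

def tdual (a : ℕ × PM n) : ℕ × PM n := (a.1, dual a.2)

lemma tdual_tdual (a : ℕ × PM n) : tdual (tdual a) = a := by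
  rw [tdual, tdual, dual_dual]

lemma tdual_tmul (a b : ℕ × PM n) : tdual (tmul a b) = tmul (tdual b) (tdual a) := by
  simp only [tdual, tmul, pmul_dual, Phi_dual, add_comm a.1]

lemma hatRankRel.tdual {x y : ℕ × PM n} (h : hatRankRel x y) : hatRankRel (tdual x) (tdual y) := by
  rcases h with rfl | ⟨hx, hy, hxy, hd⟩
  · exact Or.inl rfl
  · refine Or.inr ?_
    dsimp only [TPM.tdual]
    rw [rnk_dual, rnk_dual, hat_dual, hat_dual, hxy]
    exact ⟨hx, hy, rfl, hd⟩

lemma hatRankRel.tmul_right (a : ℕ × PM n) {x y : ℕ × PM n} (h : hatRankRel x y) :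
    hatRankRel (tmul x a) (tmul y a) := by
  simpa only [← tdual_tmul, tdual_tdual] using (h.tdual.tmul_left (TPM.tdual a)).tdual

theorem weird_congruence_general (n : ℕ) :
    IsCongruence (tmul (n := n)) (fun a b =>
      a = b ∨
      (rnk a.2 ≤ 1 ∧ rnk b.2 ≤ 1 ∧ hat a.2 = hat b.2 ∧
        (rnk a.2 : ℤ) - (rnk b.2 : ℤ) = (a.1 : ℤ) - (b.1 : ℤ))) :=
  ⟨hatRankRel_equivalence, fun _ _ a h => ⟨hatRankRel.tmul_left a h, hatRankRel.tmul_right a h⟩⟩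

/-- The relation consisting of the diagonal together with all pairs
`((i,α),(j,β))` with `α, β ∈ I_1`, `α̂ = β̂` and `rank α − rank β = i − j` (as integers)
is a congruence on `P_n^Φ`. -/
theorem weird_congruence (n : ℕ) (hn : 1 ≤ n) :
    IsCongruence (tmul (n := n)) (fun a b =>
      a = b ∨
      (rnk a.2 ≤ 1 ∧ rnk b.2 ≤ 1 ∧ hat a.2 = hat b.2 ∧
        (rnk a.2 : ℤ) - (rnk b.2 : ℤ) = (a.1 : ℤ) - (b.1 : ℤ))) :=
  weird_congruence_general n

end TPM
end

section
/- Let n ≥ 1 and let θ_0 ⊇ θ_1 ⊇ ⋯ ⊇ θ_n be a descending chain of congruences on the additive monoid (ℕ,+). Then the relation σ := ⋃_{q=0}^{n} {((i,α),(j,α)) : α ∈ D_q, (i,j) ∈ θ_q} is a congruence on the twisted partition monoid P_n^Φ. -/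
namespace TPM

variable {n : ℕ}

/-!
Multiplying a related pair `((i,α),(j,α))`, `(i,j) ∈ θ_q`, on the left by `(k,γ)` gives
`((k+i+Φ(γ,α), γα), (k+j+Φ(γ,α), γα))`. Since `rank γα ≤ q` and the chain descends, `(i,j)` lies in
`θ_{rank γα}`, which is compatible with addition; similarly on the right. The rank inequalities
`rank αβ ≤ rank α, rank β` hold because a path in `Γ(α,β)` joining the top and bottom rows must
cross the middle row, so every transversal of `αβ` contains an upper point of a transversal of
`α` and a lower point of a transversal of `β`.
-/

theorem _root_.Relation.ReflTransGen.exists_rel_exit {α : Type*} {r : α → α → Prop}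
    {p : α → Prop} {a b : α} (h : Relation.ReflTransGen r a b) (ha : p a) (hb : ¬p b) :
    ∃ c d, Relation.ReflTransGen r a c ∧ p c ∧ ¬p d ∧ r c d := by
  induction h with
  | refl => exact absurd ha hb
  | @tail c d hac hcd ih =>
    by_cases hc : p c
    · exact ⟨c, d, hac, hc, hb, hcd⟩
    · exact ih hc

section ClassesMeeting

variable {X ι κ : Type*}

abbrev ClassesMeeting (r : Setoid X) (a : ι → X) (b : κ → X) : Type _ :=
  {c : Quotient r // (∃ i, Quotient.mk r (a i) = c) ∧ ∃ j, Quotient.mk r (b j) = c}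

theorem card_classesMeeting_comm (r : Setoid X) (a : ι → X) (b : κ → X) :
    Nat.card (ClassesMeeting r a b) = Nat.card (ClassesMeeting r b a) :=
  Nat.card_congr (Equiv.subtypeEquivRight fun _ => and_comm)

theorem card_classesMeeting_le [Finite ι] (r : Setoid X) (a : ι → X) (b : κ → X) :
    Nat.card (ClassesMeeting r a b) ≤ Nat.card ι := by
  choose f hf using fun c : ClassesMeeting r a b => c.2.1
  refine Nat.card_le_card_of_injective f fun c c' h => Subtype.ext ?_
  rw [← hf c, ← hf c', h]

theorem card_classesMeeting_le_of_exists [Finite X] {r s : Setoid X} {a : ι → X} {b : κ → X}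
    (hsr : ∀ i i', s.r (a i) (a i') → r.r (a i) (a i'))
    (hr : ∀ i j, r.r (a i) (b j) → ∃ i' j', r.r (a i) (a i') ∧ s.r (a i') (b j')) :
    Nat.card (ClassesMeeting r a b) ≤ Nat.card (ClassesMeeting s a b) := by
  have key : ∀ c : ClassesMeeting r a b,
      ∃ i' j', Quotient.mk r (a i') = c.1 ∧ s.r (a i') (b j') := by
    rintro ⟨c, ⟨i, rfl⟩, ⟨j, hj⟩⟩
    obtain ⟨i', j', hii', hs⟩ := hr i j (Quotient.exact hj.symm)
    exact ⟨i', j', Quotient.sound (r.iseqv.symm hii'), hs⟩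
  choose f g hf hs using key
  let F : ClassesMeeting r a b → ClassesMeeting s a b := fun c =>
    ⟨Quotient.mk s (a (f c)), ⟨f c, rfl⟩, ⟨g c, (Quotient.sound (hs c)).symm⟩⟩
  refine Nat.card_le_card_of_injective F fun c c' h => Subtype.ext ?_
  rw [← hf c, ← hf c']
  exact Quotient.sound (hsr _ _ (Quotient.exact (congrArg Subtype.val h)))

end ClassesMeeting

theorem rnk_eq_card_classesMeeting (α : PM n) :
    rnk α = Nat.card (ClassesMeeting α Sum.inl Sum.inr) := rfl

theorem rnk_le (α : PM n) : rnk α ≤ n :=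
  (card_classesMeeting_le α _ _).trans_eq (Nat.card_fin n)

instance (α β : PM n) : Std.Symm (graphRel α β) where
  symm _ _
    | .inl ⟨u, v, h, hx, hy⟩ => .inl ⟨v, u, α.iseqv.symm h, hy, hx⟩
    | .inr ⟨u, v, h, hx, hy⟩ => .inr ⟨v, u, β.iseqv.symm h, hy, hx⟩

theorem conn_iff_reflTransGen (α β : PM n) (x y : W n) :
    conn α β x y ↔ Relation.ReflTransGen (graphRel α β) x y := by
  rw [conn, Relation.EqvGen.eqvGen_eq_reflTransGen]

theorem pmul_rel_inl_of_rel (α β : PM n) {i i' : Fin n} (h : α.r (.inl i) (.inl i')) :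
    (pmul α β).r (.inl i) (.inl i') :=
  .rel _ _ (.inl ⟨_, _, h, rfl, rfl⟩)

theorem pmul_rel_inr_of_rel (α β : PM n) {j j' : Fin n} (h : β.r (.inr j) (.inr j')) :
    (pmul α β).r (.inr j) (.inr j') :=
  .rel _ _ (.inr ⟨_, _, h, rfl, rfl⟩)

/-- A path in `Γ(α,β)` from the top row to the bottom row leaves the top row along an
edge of `α` ending in the middle row; symmetrically for `exists_rel_inr_inl_of_pmul_rel`. -/
theorem exists_rel_inl_inr_of_pmul_rel (α β : PM n) {i j : Fin n}
    (h : (pmul α β).r (.inl i) (.inr j)) :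
    ∃ i' j', (pmul α β).r (.inl i) (.inl i') ∧ α.r (.inl i') (.inr j') := by
  change conn α β (.inl i) (.inr (.inr j)) at h
  obtain ⟨c, d, hic, ⟨i', rfl⟩, hd, hcd⟩ :=
    ((conn_iff_reflTransGen α β _ _).1 h).exists_rel_exit (p := fun x => ∃ i', x = .inl i')
      ⟨i, rfl⟩ (by simp)
  rcases hcd with ⟨u, v, huv, hu, rfl⟩ | ⟨u, v, -, hu, -⟩
  · rcases u with u | u <;> rcases v with v | v <;>
      simp only [topMid, Sum.inl.injEq, reduceCtorEq] at hu hd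
    · exact absurd ⟨v, rfl⟩ hd
    · subst hu
      exact ⟨_, v, (conn_iff_reflTransGen α β _ _).2 hic, huv⟩
  · rcases u with u | u <;> simp [midBot] at hu

theorem exists_rel_inr_inl_of_pmul_rel (α β : PM n) {j i : Fin n}
    (h : (pmul α β).r (.inr j) (.inl i)) :
    ∃ j' i', (pmul α β).r (.inr j) (.inr j') ∧ β.r (.inr j') (.inl i') := by
  change conn α β (.inr (.inr j)) (.inl i) at h
  obtain ⟨c, d, hjc, ⟨j', rfl⟩, hd, hcd⟩ :=
    ((conn_iff_reflTransGen α β _ _).1 h).exists_rel_exit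
      (p := fun x => ∃ j', x = .inr (.inr j')) ⟨j, rfl⟩ (by simp)
  rcases hcd with ⟨u, v, -, hu, -⟩ | ⟨u, v, huv, hu, rfl⟩
  · rcases u with u | u <;> simp [topMid] at hu
  · rcases u with u | u <;> rcases v with v | v <;>
      simp only [midBot, Sum.inr.injEq, reduceCtorEq] at hu hd
    · subst hu
      exact ⟨_, v, (conn_iff_reflTransGen α β _ _).2 hjc, huv⟩
    · exact absurd ⟨v, rfl⟩ hd

theorem rnk_pmul_le_left (α β : PM n) : rnk (pmul α β) ≤ rnk α :=
  card_classesMeeting_le_of_exists (fun _ _ => pmul_rel_inl_of_rel α β)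
    fun _ _ => exists_rel_inl_inr_of_pmul_rel α β

theorem rnk_pmul_le_right (α β : PM n) : rnk (pmul α β) ≤ rnk β := by
  rw [rnk_eq_card_classesMeeting, rnk_eq_card_classesMeeting, card_classesMeeting_comm,
    card_classesMeeting_comm β]
  exact card_classesMeeting_le_of_exists (fun _ _ => pmul_rel_inr_of_rel α β)
    fun _ _ => exists_rel_inr_inl_of_pmul_rel α β

theorem isCongruence_tmul_of_family (θ : PM n → ℕ → ℕ → Prop)
    (hθ : ∀ α, IsCongruence (· + ·) (θ α))
    (hleft : ∀ γ α i j, θ α i j → θ (pmul γ α) i j)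
    (hright : ∀ α γ i j, θ α i j → θ (pmul α γ) i j) :
    IsCongruence tmul fun a b : ℕ × PM n => a.2 = b.2 ∧ θ a.2 a.1 b.1 := by
  refine ⟨⟨fun a => ⟨rfl, (hθ a.2).1.refl a.1⟩, ?_, ?_⟩, ?_⟩
  · rintro ⟨i, α⟩ ⟨j, _⟩ ⟨rfl, h⟩
    exact ⟨rfl, (hθ α).1.symm h⟩
  · rintro ⟨i, α⟩ ⟨j, _⟩ ⟨k, _⟩ ⟨rfl, h⟩ ⟨rfl, h'⟩
    exact ⟨rfl, (hθ α).1.trans h h'⟩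
  · rintro ⟨i, α⟩ ⟨j, _⟩ ⟨k, γ⟩ ⟨rfl, h⟩
    have hγα := hθ (pmul γ α)
    have hαγ := hθ (pmul α γ)
    exact ⟨⟨rfl, (hγα.2 _ _ _ (hγα.2 _ _ k (hleft γ α i j h)).1).2⟩,
      ⟨rfl, (hαγ.2 _ _ _ (hαγ.2 _ _ k (hright α γ i j h)).2).2⟩⟩

theorem chain_congruence_general (n : ℕ) (Θ : ℕ → ℕ → ℕ → Prop)
    (hcong : ∀ q, q ≤ n → IsCongruence (· + ·) (Θ q))
    (hchain : ∀ q r, q ≤ r → r ≤ n → ∀ i j, Θ r i j → Θ q i j) :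
    IsCongruence (tmul (n := n))
      (fun a b => ∃ q, q ≤ n ∧ rnk a.2 = q ∧ a.2 = b.2 ∧ Θ q a.1 b.1) := by
  have hmono : ∀ α β : PM n, rnk α ≤ rnk β → ∀ i j, Θ (rnk β) i j → Θ (rnk α) i j :=
    fun α β h => hchain _ _ h (rnk_le β)
  have hσ : (fun a b : ℕ × PM n => ∃ q, q ≤ n ∧ rnk a.2 = q ∧ a.2 = b.2 ∧ Θ q a.1 b.1) =
      fun a b => a.2 = b.2 ∧ Θ (rnk a.2) a.1 b.1 := by
    ext a b
    exact ⟨fun ⟨_, _, hq, h⟩ => hq ▸ h, fun h => ⟨_, rnk_le a.2, rfl, h⟩⟩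
  rw [hσ]
  exact isCongruence_tmul_of_family (fun α => Θ (rnk α)) (fun α => hcong _ (rnk_le α))
    (fun γ α => hmono _ _ (rnk_pmul_le_right γ α)) (fun α γ => hmono _ _ (rnk_pmul_le_left α γ))

/-- Given a descending chain `θ_0 ⊇ θ_1 ⊇ ⋯ ⊇ θ_n` of congruences on
`(ℕ,+)`, the union over `0 ≤ q ≤ n` of the sets `{((i,α),(j,α)) : α ∈ D_q, (i,j) ∈ θ_q}`
is a congruence on `P_n^Φ`. -/
theorem chain_congruence (n : ℕ) (hn : 1 ≤ n) (Θ : ℕ → ℕ → ℕ → Prop)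
    (hcong : ∀ q, q ≤ n → IsCongruence (· + ·) (Θ q))
    (hchain : ∀ q r, q ≤ r → r ≤ n → ∀ i j, Θ r i j → Θ q i j) :
    IsCongruence (tmul (n := n))
      (fun a b => ∃ q, q ≤ n ∧ rnk a.2 = q ∧ a.2 = b.2 ∧ Θ q a.1 b.1) :=
  chain_congruence_general n Θ hcong hchain

end TPM
end
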